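/- arXiv:2012.15277 — 2 statements merged into one kernel-verified Lean document; each statement's English description precedes it below -/
import Mathlib

section
/- Let n ≥ 2 and q a primitive n-th root of unity, and let r, ℓ be integers with 2ℓ ≤ n+1. The 2×2 matrix Q = [[q^{r(1-r-ℓ)}(1-q^{1-ℓ}), q^{(r+1)(1-r-ℓ)}], [q^{r(2-r-ℓ)}, 0]] has -q^{-r²+r-rℓ-ℓ+1} as an eigenvalue, i.e., det(Q + q^{-r²+r-rℓ-ℓ+1}·I) = 0. -/
/-! With `a = q ^ (r * (1 - r - ℓ))` and `b = q ^ (1 - ℓ)` the claimed eigenvalue is `-(a * b)` and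
the top-left entry of `Q` is `a * (1 - b)`, so `det (Q + a b I) = a² b - Q₀₁ Q₁₀`; the two
off-diagonal exponents add up to `2 r (1 - r - ℓ) + (1 - ℓ)`, which makes this vanish. -/

theorem Matrix.det_fin_two_mul_one_sub_add_mul_smul_one {R : Type*} [CommRing R] (a b c d : R) :
    (!![a * (1 - b), c; d, 0] + (a * b) • 1).det = a ^ 2 * b - c * d := by
  simp only [Matrix.det_fin_two, Matrix.add_apply, Matrix.of_apply, Matrix.cons_val',
    Matrix.cons_val_zero, Matrix.cons_val_one, Matrix.cons_val_fin_one, Matrix.smul_apply,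
    Matrix.one_apply_eq, Matrix.one_apply_ne zero_ne_one, Matrix.one_apply_ne one_ne_zero,
    smul_eq_mul, mul_one, mul_zero, add_zero, zero_add]
  ring

theorem stmt10_general {k : Type*} [Field k]
    (n : ℕ) (hn : 2 ≤ n) (q : k) (hq : IsPrimitiveRoot q n)
    (r ℓ : ℤ) :
    let Q : Matrix (Fin 2) (Fin 2) k :=
      !![q ^ (r * (1 - r - ℓ)) * (1 - q ^ (1 - ℓ)), q ^ ((r + 1) * (1 - r - ℓ));
         q ^ (r * (2 - r - ℓ)), 0]
    (Q + q ^ (-r ^ 2 + r - r * ℓ - ℓ + 1) • 1).det = 0 := by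
  intro Q
  have hq0 : q ≠ 0 := hq.ne_zero (by omega)
  have eigenvalue_eq : q ^ (-r ^ 2 + r - r * ℓ - ℓ + 1) = q ^ (r * (1 - r - ℓ)) * q ^ (1 - ℓ) := by
    rw [← zpow_add₀ hq0]; ring_nf
  rw [eigenvalue_eq, Matrix.det_fin_two_mul_one_sub_add_mul_smul_one, sub_eq_zero,
    ← zpow_add₀ hq0, ← zpow_natCast, ← zpow_mul, ← zpow_add₀ hq0]
  congr 1
  ring

theorem stmt10 {k : Type*} [Field k] [CharZero k]
    (n : ℕ) (hn : 2 ≤ n) (q : k) (hq : IsPrimitiveRoot q n)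
    (r ℓ : ℤ) (hℓ : 1 ≤ ℓ) (h2ℓ : 2 * ℓ ≤ (n : ℤ) + 1) :
    let Q : Matrix (Fin 2) (Fin 2) k :=
      !![q ^ (r * (1 - r - ℓ)) * (1 - q ^ (1 - ℓ)), q ^ ((r + 1) * (1 - r - ℓ));
         q ^ (r * (2 - r - ℓ)), 0]
    (Q + q ^ (-r ^ 2 + r - r * ℓ - ℓ + 1) • 1).det = 0 :=
  stmt10_general n hn q hq r ℓ
end

section
/- Let n ≥ 2 and define sequences of nonnegative integers indexed by rows 1 ≤ k ≤ 2n-2 by the recursions of the Bratteli graphs Γ (partitions of k with at most two parts, edges given by adding a box) and Γ_n (same graph but with the irregular diamonds at the first critical line: no edge from the critical vertex to its northeast child and a double edge to its southwest child). If p_i^{(k)}, s_i^{(k)} denote path counts in Γ_n to the left/right of the first critical line and p̃_i^{(k)}, s̃_i^{(k)} the corresponding path counts in Γ, then for all 1 ≤ k ≤ 2n-2 and all valid indices i: p_i^{(k)} = p̃_i^{(k)} and p_i^{(k)} + s_i^{(k)} = s̃_i^{(k)}. -/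
/-- Path counts (from the vertex `{1}` at level 1) in the Bratteli diagram `Γ` of
partitions `(b1, b2)` with at most two parts (`b1 ≥ b2 ≥ 0`, `b1 + b2 = k` at
level `k`); edges add one box to either part, keeping `b1 ≥ b2`. -/
def gcount : ℕ → ℤ → ℤ → ℕ
  | 0, _, _ => 0
  | 1, b1, b2 => if b1 = 1 ∧ b2 = 0 then 1 else 0
  | k + 2, b1, b2 =>
    if b1 < b2 then 0
    else (if b2 ≤ b1 - 1 then gcount (k + 1) (b1 - 1) b2 else 0)
      + gcount (k + 1) b1 (b2 - 1)

/-- Path counts in the modified Bratteli diagram `Γ_n`, with the irregular diamonds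
at the first critical line (`b1 - b2 + 1 = n`): a critical vertex has no edge
increasing the second part (no northeast edge), and a vertex with
`b1 - b2 + 1 = n + 1` has a doubled edge increasing the second part
(double southwest edge). -/
def hcount (n : ℕ) : ℕ → ℤ → ℤ → ℕ
  | 0, _, _ => 0
  | 1, b1, b2 => if b1 = 1 ∧ b2 = 0 then 1 else 0
  | k + 2, b1, b2 =>
    if b1 < b2 then 0
    else (if b2 ≤ b1 - 1 then hcount n (k + 1) (b1 - 1) b2 else 0)
      + (if b1 - (b2 - 1) + 1 = (n : ℤ) then 0
         else if b1 - (b2 - 1) + 1 = (n : ℤ) + 1 then 2 else 1)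
        * hcount n (k + 1) b1 (b2 - 1)

/-!
Fold `Γ_n` across its first critical line `b1 - b2 + 1 = n`: to the count at a vertex strictly
left of the line add the count at its mirror image. The folded count obeys the recursion of `Γ`:
the doubled edges into the critical line carry the contributions of the mirror images, and the
edges cut out of it keep a critical vertex from being counted twice. This can only fail at the
wall `b1 = b2`, whose mirror image is the second critical line `b1 - b2 + 1 = 2n`, first reached
in row `2n - 1`.
-/

theorem gcount_eq_zero_of_neg : ∀ {k : ℕ} {b1 b2 : ℤ}, b2 < 0 → gcount k b1 b2 = 0
  | 0, _, _, _ => rfl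
  | 1, _, _, h => by simp only [gcount, ite_eq_right_iff]; omega
  | _ + 2, _, _, h => by
    rw [gcount, gcount_eq_zero_of_neg h, gcount_eq_zero_of_neg (by omega)]
    simp

theorem hcount_eq_zero_of_neg {n : ℕ} :
    ∀ {k : ℕ} {b1 b2 : ℤ}, b2 < 0 → hcount n k b1 b2 = 0
  | 0, _, _, _ => rfl
  | 1, _, _, h => by simp only [hcount, ite_eq_right_iff]; omega
  | _ + 2, _, _, h => by
    rw [hcount, hcount_eq_zero_of_neg h, hcount_eq_zero_of_neg (by omega)]
    simp

theorem gcount_succ_succ {k : ℕ} {b1 b2 : ℤ} (hord : b2 ≤ b1) :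
    gcount (k + 2) b1 b2
      = (if b2 < b1 then gcount (k + 1) (b1 - 1) b2 else 0) + gcount (k + 1) b1 (b2 - 1) := by
  rw [gcount, if_neg (not_lt.2 hord)]
  simp only [Int.le_sub_one_iff]

/-- Multiplicity in `Γ_n` of the edge adding a box to the second part of a vertex with
`b1 - b2 + 1 = c`. -/
def edgeWeight (n : ℕ) (c : ℤ) : ℕ :=
  if c = n then 0 else if c = n + 1 then 2 else 1

theorem edgeWeight_eq_one {n : ℕ} {c : ℤ} (h₀ : c ≠ n) (h₁ : c ≠ n + 1) :
    edgeWeight n c = 1 := by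
  rw [edgeWeight, if_neg h₀, if_neg h₁]

theorem hcount_succ_succ {n k : ℕ} {b1 b2 : ℤ} (hord : b2 ≤ b1) :
    hcount n (k + 2) b1 b2
      = (if b2 < b1 then hcount n (k + 1) (b1 - 1) b2 else 0)
        + edgeWeight n (b1 - b2 + 2) * hcount n (k + 1) b1 (b2 - 1) := by
  rw [hcount, if_neg (not_lt.2 hord), show b1 - (b2 - 1) + 1 = b1 - b2 + 2 by ring]
  simp only [Int.le_sub_one_iff, edgeWeight]

/-- `(b2 + n - 1, b1 - n + 1)` is the reflection of `(b1, b2)` across the critical line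
`b1 - b2 + 1 = n`. -/
def foldedCount (n k : ℕ) (b1 b2 : ℤ) : ℕ :=
  hcount n k b1 b2 + if b1 - b2 + 1 < n then hcount n k (b2 + n - 1) (b1 - n + 1) else 0

section
variable {n k : ℕ} {b1 b2 : ℤ}

theorem foldedCount_of_le (h : n ≤ b1 - b2 + 1) : foldedCount n k b1 b2 = hcount n k b1 b2 := by
  rw [foldedCount, if_neg (not_lt.2 h), add_zero]

theorem foldedCount_of_lt (h : b1 - b2 + 1 < n) :
    foldedCount n k b1 b2 = hcount n k b1 b2 + hcount n k (b2 + n - 1) (b1 - n + 1) := by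
  rw [foldedCount, if_pos h]

theorem foldedCount_eq_zero_of_neg (h : b2 < 0) : foldedCount n k b1 b2 = 0 := by
  rw [foldedCount, hcount_eq_zero_of_neg h, zero_add]
  split_ifs with hc
  · exact hcount_eq_zero_of_neg (by omega)
  · rfl

theorem foldedCount_succ_succ_of_gt (hord : b2 ≤ b1) (hc : n < b1 - b2 + 1) :
    foldedCount n (k + 2) b1 b2
      = (if b2 < b1 then foldedCount n (k + 1) (b1 - 1) b2 else 0)
        + foldedCount n (k + 1) b1 (b2 - 1) := by
  rw [foldedCount_of_le hc.le, hcount_succ_succ hord, edgeWeight_eq_one (by omega) (by omega),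
    one_mul, foldedCount_of_le (by omega : (n : ℤ) ≤ b1 - (b2 - 1) + 1)]
  split_ifs with hlt
  · rw [foldedCount_of_le (by omega)]
  · rfl

theorem foldedCount_succ_succ_of_eq (hlt : b2 < b1) (hc : b1 - b2 + 1 = n) :
    foldedCount n (k + 2) b1 b2
      = (if b2 < b1 then foldedCount n (k + 1) (b1 - 1) b2 else 0)
        + foldedCount n (k + 1) b1 (b2 - 1) := by
  have hweight : edgeWeight n (b1 - b2 + 2) = 2 := by
    rw [edgeWeight, if_neg (by omega), if_pos (by omega)]
  rw [foldedCount_of_le hc.ge, hcount_succ_succ hlt.le, hweight, if_pos hlt, if_pos hlt,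
    foldedCount_of_lt (by omega), foldedCount_of_le (by omega : (n : ℤ) ≤ b1 - (b2 - 1) + 1),
    show b2 + n - 1 = b1 by omega, show b1 - 1 - n + 1 = b2 - 1 by omega]
  ring

theorem foldedCount_succ_succ_of_lt (hk : k + 2 ≤ 2 * n - 2) (hsum : b1 + b2 = (k + 2 : ℕ))
    (hord : b2 ≤ b1) (hc : b1 - b2 + 1 < n) :
    foldedCount n (k + 2) b1 b2
      = (if b2 < b1 then foldedCount n (k + 1) (b1 - 1) b2 else 0)
        + foldedCount n (k + 1) b1 (b2 - 1) := by
  have hnorth : (if b2 < b1 then foldedCount n (k + 1) (b1 - 1) b2 else 0)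
      = (if b2 < b1 then hcount n (k + 1) (b1 - 1) b2 else 0)
        + hcount n (k + 1) (b2 + n - 1) (b1 - n) := by
    split_ifs with hlt
    · rw [foldedCount_of_lt (by omega), show b1 - 1 - n + 1 = b1 - n by ring]
    · rw [hcount_eq_zero_of_neg (by omega), zero_add]
  rw [hnorth, foldedCount_of_lt hc, hcount_succ_succ hord,
    hcount_succ_succ (by omega : b1 - n + 1 ≤ b2 + n - 1),
    if_pos (show b1 - n + 1 < b2 + n - 1 by omega),
    edgeWeight_eq_one (c := b2 + n - 1 - (b1 - n + 1) + 2) (by omega) (by omega), one_mul,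
    show b2 + n - 1 - 1 = b2 + n - 2 by ring, show b1 - n + 1 - 1 = b1 - n by ring]
  rcases (show b1 - b2 + 2 < n ∨ b1 - b2 + 2 = n by omega) with hc' | hc'
  · rw [edgeWeight_eq_one (by omega) (by omega), one_mul, foldedCount_of_lt (by omega),
      show b2 - 1 + n - 1 = b2 + n - 2 by ring]
    ring
  · rw [edgeWeight, if_pos hc', zero_mul, foldedCount_of_le (by omega),
      show b2 + n - 2 = b1 by omega, show b1 - n + 1 = b2 - 1 by omega]
    ring

theorem foldedCount_succ_succ (hk : k + 2 ≤ 2 * n - 2) (hsum : b1 + b2 = (k + 2 : ℕ))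
    (hord : b2 ≤ b1) :
    foldedCount n (k + 2) b1 b2
      = (if b2 < b1 then foldedCount n (k + 1) (b1 - 1) b2 else 0)
        + foldedCount n (k + 1) b1 (b2 - 1) := by
  rcases lt_trichotomy (b1 - b2 + 1) n with hc | hc | hc
  · exact foldedCount_succ_succ_of_lt hk hsum hord hc
  · exact foldedCount_succ_succ_of_eq (by omega) hc
  · exact foldedCount_succ_succ_of_gt hord hc

theorem foldedCount_eq_gcount :
    ∀ {k : ℕ} {b1 b2 : ℤ}, k ≤ 2 * n - 2 → b1 + b2 = k → b2 ≤ b1 →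
      foldedCount n k b1 b2 = gcount k b1 b2
  | 0, _, _, _, _, _ => by simp [foldedCount, hcount, gcount]
  | 1, b1, b2, hk, hsum, hord => by
    rcases lt_or_ge b2 0 with hb2 | hb2
    · rw [foldedCount_eq_zero_of_neg hb2, gcount_eq_zero_of_neg hb2]
    · obtain ⟨rfl, rfl⟩ : b1 = 1 ∧ b2 = 0 := by omega
      simp only [foldedCount, hcount, gcount]
      split_ifs <;> omega
  | k + 2, b1, b2, hk, hsum, hord => by
    rw [foldedCount_succ_succ hk hsum hord, gcount_succ_succ hord,
      foldedCount_eq_gcount (by omega) (by push_cast; omega) (by omega : b2 - 1 ≤ b1)]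
    split_ifs with hlt
    · rw [foldedCount_eq_gcount (by omega) (by push_cast; omega) (by omega : b2 ≤ b1 - 1)]
    · rfl

end

theorem stmt18_general (n : ℕ) (k : ℕ) (hk2 : k ≤ 2 * n - 2)
    (b1 b2 : ℤ) (hsum : b1 + b2 = (k : ℤ)) (hord : b2 ≤ b1) :
    ((n : ℤ) < b1 - b2 + 1 → hcount n k b1 b2 = gcount k b1 b2) ∧
    (b1 - b2 + 1 = (n : ℤ) → hcount n k b1 b2 = gcount k b1 b2) ∧
    (b1 - b2 + 1 < (n : ℤ) →
      hcount n k b1 b2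
          + hcount n k (b1 + ((n : ℤ) - (b1 - b2 + 1))) (b2 - ((n : ℤ) - (b1 - b2 + 1)))
        = gcount k b1 b2) := by
  have hfold := foldedCount_eq_gcount hk2 hsum hord
  refine ⟨fun hc => ?_, fun hc => ?_, fun hc => ?_⟩
  · rwa [foldedCount_of_le hc.le] at hfold
  · rwa [foldedCount_of_le hc.ge] at hfold
  · rwa [foldedCount_of_lt hc, show b2 + n - 1 = b1 + (n - (b1 - b2 + 1)) by ring,
      show b1 - n + 1 = b2 - (n - (b1 - b2 + 1)) by ring] at hfold

/-- Proposition 5.5: in rows `1 ≤ k ≤ 2n-2`, path counts in `Γ_n` strictly to the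
left of the first critical line agree with those of `Γ` (`p_i = p̃_i`), and for a
vertex on or to the right of the critical line the `Γ`-count is the sum of the
`Γ_n`-count at that vertex and at its mirror image across the critical line
(`p_i + s_i = s̃_i`, with `p₀ = 0` on the line itself). -/
theorem stmt18 (n : ℕ) (hn : 2 ≤ n) (k : ℕ) (hk1 : 1 ≤ k) (hk2 : k ≤ 2 * n - 2)
    (b1 b2 : ℤ) (hsum : b1 + b2 = (k : ℤ)) (hb2 : 0 ≤ b2) (hord : b2 ≤ b1) :
    ((n : ℤ) < b1 - b2 + 1 → hcount n k b1 b2 = gcount k b1 b2) ∧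
    (b1 - b2 + 1 = (n : ℤ) → hcount n k b1 b2 = gcount k b1 b2) ∧
    (b1 - b2 + 1 < (n : ℤ) →
      hcount n k b1 b2
          + hcount n k (b1 + ((n : ℤ) - (b1 - b2 + 1))) (b2 - ((n : ℤ) - (b1 - b2 + 1)))
        = gcount k b1 b2) :=
  stmt18_general n k hk2 b1 b2 hsum hord
end
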